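/- In the HiOCO setting with non-zero local delay, the dynamic regret satisfies: Σ_{t=1}^{T} (f_t(x_t) − f_t(x_t*)) ≤ τ·D·R + (D/(1 − η^{(J_l+J_r)/2})) · ( τ·R + τ·Π* + (√β/(1 − √η))·Δ ), where τ = τ_l + τ_r is the total delay. -/

import Mathlib

/-!
A projected step along a `δ`-accurate gradient of a `μ`-strongly convex, `L`-smooth function
contracts the distance to its constrained minimiser: `‖y' - w‖ ≤ √η ‖y - w‖ + √β δ`. In a round
of HiOCO, `x t` arises from `x (t - τ)` by `J_r` such steps on `f (t - τ)` followed by `J_l` steps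
on `f (t - τ_l)`, so `e t = ‖x t - x* t‖` obeys the delayed recursion
`e t ≤ √η ^ (J_l + J_r) e (t - τ) + (drift of x* over (t - τ, t]) + (error terms)`.
Summing it, the first `τ` rounds cost at most `τ R`, every increment of `x*` lies in at most `τ`
windows, and the error weights add up to at most `1 / (1 - √η)`; solving for `∑ e t` and using
`f t (x t) - f t (x* t) ≤ D e t` gives the bound.
-/

open scoped RealInnerProductSpace
open Finset

section Projection

variable {E : Type*} [NormedAddCommGroup E] [InnerProductSpace ℝ E] {X : Set E}

theorem real_inner_sub_le_zero_of_forall_norm_sub_le (hX : Convex ℝ X) {p q w : E}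
    (hq : q ∈ X) (hmin : ∀ v ∈ X, ‖p - q‖ ≤ ‖p - v‖) (hw : w ∈ X) : ⟪p - q, w - q⟫ ≤ 0 := by
  have : Nonempty X := ⟨⟨q, hq⟩⟩
  refine (norm_eq_iInf_iff_real_inner_le_zero hX hq).mp (le_antisymm ?_ ?_) w hw
  · exact le_ciInf fun v => hmin v v.2
  · have hbdd : BddBelow (Set.range fun v : X => ‖p - v‖) :=
      ⟨0, Set.forall_mem_range.2 fun _ => norm_nonneg _⟩
    exact ciInf_le hbdd ⟨q, hq⟩

variable [CompleteSpace E]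

theorem IsMinOn.inner_gradient_sub_nonneg (hX : Convex ℝ X) {f : E → ℝ} {w v : E}
    (hmin : IsMinOn f X w) (hf : DifferentiableAt ℝ f w) (hw : w ∈ X) (hv : v ∈ X) :
    0 ≤ ⟪gradient f w, v - w⟫ :=
  IsMinOn.localize hmin |>.hasFDerivWithinAt_nonneg hf.hasGradientAt.hasFDerivAt.hasFDerivWithinAt
    (sub_mem_posTangentConeAt_of_segment_subset (hX.segment_subset hw hv))

end Projection

theorem sub_le_mul_norm_sub_of_le_add_inner {E : Type*} [NormedAddCommGroup E]
    [InnerProductSpace ℝ E] {f : E → ℝ} {a b g : E} {μ D : ℝ} (hμ : 0 ≤ μ)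
    (h : f a + ⟪g, b - a⟫ + μ / 2 * ‖b - a‖ ^ 2 ≤ f b) (hg : ‖g‖ ≤ D) :
    f a - f b ≤ D * ‖a - b‖ := by
  have hinner := neg_le_of_abs_le (abs_real_inner_le_norm g (b - a))
  have hD := mul_le_mul_of_nonneg_right hg (norm_nonneg (b - a))
  rw [norm_sub_rev b a] at hinner hD h
  nlinarith [sq_nonneg ‖a - b‖]

theorem le_sqrt_mul_add_sqrt_mul_of_sq_le {r s t A B : ℝ} (hA : 0 ≤ A) (hB : 0 ≤ B)
    (hs : 0 ≤ s) (ht : 0 ≤ t) (h : r ^ 2 ≤ A * s ^ 2 + B * t ^ 2) :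
    r ≤ √A * s + √B * t := by
  have hcross : 0 ≤ (√A * s) * (√B * t) := by positivity
  refine (abs_le_of_sq_le_sq' ?_ (by positivity)).2
  nlinarith [Real.sq_sqrt hA, Real.sq_sqrt hB]

theorem le_pow_mul_add_mul_geom_sum {a : ℕ → ℝ} {q d : ℝ} (hq : 0 ≤ q) {J : ℕ}
    (h : ∀ j < J, a (j + 1) ≤ q * a j + d) :
    a J ≤ q ^ J * a 0 + d * ∑ i ∈ range J, q ^ i := by
  induction J with
  | zero => simp
  | succ J ih =>
    calc a (J + 1) ≤ q * a J + d := h J J.lt_succ_self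
      _ ≤ q * (q ^ J * a 0 + d * ∑ i ∈ range J, q ^ i) + d := by
          gcongr
          exact ih fun j hj => h j (Nat.lt_succ_of_lt hj)
      _ = _ := by rw [geom_sum_succ, pow_succ]; ring

theorem pow_mul_geom_sum_add_geom_sum_le {q : ℝ} (hq0 : 0 ≤ q) (hq1 : q < 1) (m n : ℕ) :
    q ^ m * ∑ i ∈ range n, q ^ i + ∑ i ∈ range m, q ^ i ≤ 1 / (1 - q) := by
  have hsplit : ∑ i ∈ range (m + n), q ^ i
      = ∑ i ∈ range m, q ^ i + q ^ m * ∑ i ∈ range n, q ^ i := by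
    simp only [sum_range_add, mul_sum, pow_add]
  have hle := geom_sum_Ico_le_of_lt_one (m := 0) (n := m + n) hq0 hq1
  rw [← range_eq_Ico, hsplit, pow_zero] at hle
  linarith

section InexactProjectedGradient

variable {E : Type*} [NormedAddCommGroup E] [InnerProductSpace ℝ E] [CompleteSpace E]
  {X : Set E} {f : E → ℝ} {α μ L γ δ : ℝ} {w y y' : E}

def IsInexactProjGradStep (X : Set E) (α δ : ℝ) (f : E → ℝ) (y y' : E) : Prop :=
  ∃ g : E, ‖g - gradient f y‖ ≤ δ ∧ y' ∈ X ∧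
    ∀ v ∈ X, ‖(y - (1 / α) • g) - y'‖ ≤ ‖(y - (1 / α) • g) - v‖

def IsInexactProjGradRun (X : Set E) (α δ : ℝ) (f : E → ℝ) (J : ℕ) (u : ℕ → E) : Prop :=
  ∀ j, 1 ≤ j → j ≤ J → IsInexactProjGradStep X α δ f (u (j - 1)) (u j)

-- `γ` is the weight of the AM-GM split `2 δ r ≤ γ r ^ 2 + δ ^ 2 / γ` absorbing the gradient error.
theorem IsInexactProjGradStep.sq_norm_sub_le (hstep : IsInexactProjGradStep X α δ f y y')
    (hX : Convex ℝ X) (hα : 0 < α) (hLα : L ≤ α) (hγ : 0 < γ)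
    (hsc : ∀ a ∈ X, ∀ b ∈ X, f a + ⟪gradient f a, b - a⟫ + μ / 2 * ‖b - a‖ ^ 2 ≤ f b)
    (hsm : ∀ a ∈ X, ∀ b ∈ X, f b ≤ f a + ⟪gradient f a, b - a⟫ + L / 2 * ‖b - a‖ ^ 2)
    (hmin : IsMinOn f X w) (hfw : DifferentiableAt ℝ f w) (hw : w ∈ X) (hy : y ∈ X) :
    (α + μ - γ) * ‖y' - w‖ ^ 2 ≤ (α - μ) * ‖y - w‖ ^ 2 + δ ^ 2 / γ := by
  obtain ⟨g, hg, hy', hproj⟩ := hstep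
  have hobtuse := real_inner_sub_le_zero_of_forall_norm_sub_le hX hy' hproj hw
  rw [show y - (1 / α) • g - y' = (y - y') - (1 / α) • g by abel,
    show w - y' = -(y' - w) by abel, inner_neg_right, inner_sub_left,
    real_inner_smul_left] at hobtuse
  have hpol : ‖y - w‖ ^ 2 = ‖y - y'‖ ^ 2 + 2 * ⟪y - y', y' - w⟫ + ‖y' - w‖ ^ 2 := by
    rw [← norm_add_sq_real, sub_add_sub_cancel]
  have hupper : ⟪g, y' - w⟫ ≤ α / 2 * (‖y - w‖ ^ 2 - ‖y - y'‖ ^ 2 - ‖y' - w‖ ^ 2) := by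
    have := mul_le_mul_of_nonneg_left (neg_nonpos.mp hobtuse |> sub_nonneg.mpr) hα.le
    field_simp at this
    rw [hpol]
    linarith
  have hsplit : ⟪g, y' - w⟫ = ⟪gradient f y, y' - y⟫ - ⟪gradient f y, w - y⟫
      + ⟪g - gradient f y, y' - w⟫ := by
    rw [inner_sub_left, ← inner_sub_right, sub_sub_sub_cancel_right]
    ring
  have herr : -(δ * ‖y' - w‖) ≤ ⟪g - gradient f y, y' - w⟫ :=
    (neg_le_neg (mul_le_mul_of_nonneg_right hg (norm_nonneg _))).trans
      (neg_le_of_abs_le (abs_real_inner_le_norm _ _))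
  have hgrowth : f w + μ / 2 * ‖y' - w‖ ^ 2 ≤ f y' := by
    linarith [hsc w hw y' hy', hmin.inner_gradient_sub_nonneg hX hfw hw hy']
  have hamgm : 2 * δ * ‖y' - w‖ ≤ γ * ‖y' - w‖ ^ 2 + δ ^ 2 / γ := by
    have : γ * ‖y' - w‖ ^ 2 + δ ^ 2 / γ - 2 * δ * ‖y' - w‖ = (γ * ‖y' - w‖ - δ) ^ 2 / γ := by
      field_simp
      ring
    linarith [show 0 ≤ (γ * ‖y' - w‖ - δ) ^ 2 / γ by positivity]
  have hαL : 0 ≤ (α - L) * ‖y - y'‖ ^ 2 := mul_nonneg (by linarith) (sq_nonneg _)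
  have hsm_y := hsm y hy y' hy'
  have hsc_y := hsc y hy w hw
  rw [norm_sub_rev y' y] at hsm_y
  rw [norm_sub_rev w y] at hsc_y
  linarith

theorem IsInexactProjGradStep.norm_sub_le (hstep : IsInexactProjGradStep X α δ f y y')
    (hX : Convex ℝ X) (hμα : μ ≤ α) (hLα : L ≤ α) (hγ : 0 < γ) (hγμ : γ < 2 * μ)
    (hsc : ∀ a ∈ X, ∀ b ∈ X, f a + ⟪gradient f a, b - a⟫ + μ / 2 * ‖b - a‖ ^ 2 ≤ f b)
    (hsm : ∀ a ∈ X, ∀ b ∈ X, f b ≤ f a + ⟪gradient f a, b - a⟫ + L / 2 * ‖b - a‖ ^ 2)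
    (hmin : IsMinOn f X w) (hfw : DifferentiableAt ℝ f w) (hw : w ∈ X) (hy : y ∈ X)
    (hδ : 0 ≤ δ) :
    ‖y' - w‖ ≤ √((α - μ) / (α + μ - γ)) * ‖y - w‖ + √(1 / (γ * (α + μ - γ))) * δ := by
  have hden : 0 < α + μ - γ := by linarith
  have hsq := hstep.sq_norm_sub_le hX (by linarith) hLα hγ hsc hsm hmin hfw hw hy
  refine le_sqrt_mul_add_sqrt_mul_of_sq_le (div_nonneg (by linarith) hden.le) (by positivity)
    (norm_nonneg _) hδ ?_
  calc ‖y' - w‖ ^ 2 ≤ ((α - μ) * ‖y - w‖ ^ 2 + δ ^ 2 / γ) / (α + μ - γ) := by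
        rw [le_div_iff₀ hden]
        linarith
    _ = _ := by field_simp

theorem IsInexactProjGradRun.mem {J : ℕ} {u : ℕ → E} (hrun : IsInexactProjGradRun X α δ f J u)
    (hu0 : u 0 ∈ X) {j : ℕ} (hj : j ≤ J) : u j ∈ X := by
  rcases Nat.eq_zero_or_pos j with rfl | hj0
  · exact hu0
  · exact (hrun j hj0 hj).choose_spec.2.1

theorem IsInexactProjGradRun.norm_sub_le {J : ℕ} {u : ℕ → E}
    (hrun : IsInexactProjGradRun X α δ f J u) (hu0 : u 0 ∈ X)
    (hX : Convex ℝ X) (hμα : μ ≤ α) (hLα : L ≤ α) (hγ : 0 < γ) (hγμ : γ < 2 * μ)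
    (hsc : ∀ a ∈ X, ∀ b ∈ X, f a + ⟪gradient f a, b - a⟫ + μ / 2 * ‖b - a‖ ^ 2 ≤ f b)
    (hsm : ∀ a ∈ X, ∀ b ∈ X, f b ≤ f a + ⟪gradient f a, b - a⟫ + L / 2 * ‖b - a‖ ^ 2)
    (hmin : IsMinOn f X w) (hfw : DifferentiableAt ℝ f w) (hw : w ∈ X) (hδ : 0 ≤ δ) :
    ‖u J - w‖ ≤ √((α - μ) / (α + μ - γ)) ^ J * ‖u 0 - w‖
      + √(1 / (γ * (α + μ - γ))) * δ * ∑ i ∈ range J, √((α - μ) / (α + μ - γ)) ^ i := by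
  refine le_pow_mul_add_mul_geom_sum (a := fun j => ‖u j - w‖) (Real.sqrt_nonneg _)
    fun j hj => ?_
  have hstep := hrun (j + 1) (by omega) hj
  rw [Nat.add_sub_cancel] at hstep
  exact hstep.norm_sub_le hX hμα hLα hγ hγμ hsc hsm hmin hfw hw (hrun.mem hu0 hj.le) hδ

end InexactProjectedGradient

theorem norm_sub_le_of_two_phases {E : Type*} [SeminormedAddCommGroup E]
    {a b c w₁ w₂ w₃ : E} {q e₁ e₂ : ℝ} {m n : ℕ} (hq0 : 0 ≤ q) (hq1 : q ≤ 1)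
    (h₁ : ‖b - w₁‖ ≤ q ^ m * ‖a - w₁‖ + e₁) (h₂ : ‖c - w₂‖ ≤ q ^ n * ‖b - w₂‖ + e₂) :
    ‖c - w₃‖ ≤ q ^ (n + m) * ‖a - w₁‖ + (‖w₁ - w₂‖ + ‖w₂ - w₃‖) + (q ^ n * e₁ + e₂) := by
  have hqn0 : 0 ≤ q ^ n := pow_nonneg hq0 n
  have hqn1 : q ^ n ≤ 1 := pow_le_one₀ hq0 hq1
  have hb : ‖b - w₂‖ ≤ q ^ m * ‖a - w₁‖ + e₁ + ‖w₁ - w₂‖ :=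
    (norm_sub_le_norm_sub_add_norm_sub b w₁ w₂).trans (by linarith)
  have hw : q ^ n * ‖w₁ - w₂‖ ≤ ‖w₁ - w₂‖ := mul_le_of_le_one_left (norm_nonneg _) hqn1
  calc ‖c - w₃‖ ≤ ‖c - w₂‖ + ‖w₂ - w₃‖ := norm_sub_le_norm_sub_add_norm_sub c w₂ w₃
    _ ≤ q ^ n * (q ^ m * ‖a - w₁‖ + e₁ + ‖w₁ - w₂‖) + e₂ + ‖w₂ - w₃‖ := by
        gcongr
        exact h₂.trans (by gcongr)
    _ ≤ _ := by rw [pow_add]; nlinarith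

theorem norm_sub_sub_le_sum_range {E : Type*} [SeminormedAddCommGroup E] (v : ℕ → E)
    (n k : ℕ) : ‖v n - v (n - k)‖ ≤ ∑ i ∈ range k, ‖v (n - i) - v (n - i - 1)‖ := by
  simpa [dist_eq_norm, Nat.sub_sub] using dist_le_range_sum_dist (fun i => v (n - i)) k

theorem sum_Icc_comp_sub_le (a : ℕ → ℝ) {l m n d : ℕ} (ha : ∀ s ∈ Icc l n, 0 ≤ a s)
    (h : l + d ≤ m) : ∑ t ∈ Icc m n, a (t - d) ≤ ∑ s ∈ Icc l n, a s := by
  have hinj : Set.InjOn (· - d) (Icc m n : Set ℕ) := fun t ht t' ht' htt' => by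
    simp only [coe_Icc, Set.mem_Icc] at ht ht' htt'
    omega
  rw [← sum_image hinj]
  refine sum_le_sum_of_subset_of_nonneg (fun s hs => ?_) fun s hs _ => ha s hs
  simp only [mem_image, mem_Icc] at hs ⊢
  omega

theorem sum_Icc_sum_range_sub_le (a : ℕ → ℝ) {k T : ℕ} (ha : ∀ s ∈ Icc 2 T, 0 ≤ a s) :
    ∑ t ∈ Icc (k + 1) T, ∑ i ∈ range k, a (t - i) ≤ k * ∑ s ∈ Icc 2 T, a s := by
  rw [sum_comm]
  calc ∑ i ∈ range k, ∑ t ∈ Icc (k + 1) T, a (t - i)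
      ≤ ∑ _i ∈ range k, ∑ s ∈ Icc 2 T, a s :=
        sum_le_sum fun i hi => sum_Icc_comp_sub_le a ha (by rw [mem_range] at hi; omega)
    _ = k * ∑ s ∈ Icc 2 T, a s := by rw [sum_const, card_range, nsmul_eq_mul]

theorem sum_norm_sub_delayed_le {E : Type*} [SeminormedAddCommGroup E] (v : ℕ → E)
    (k l T : ℕ) :
    ∑ t ∈ Icc (k + l + 1) T, (‖v (t - (k + l)) - v (t - k)‖ + ‖v (t - k) - v t‖)
      ≤ (k + l : ℕ) * ∑ t ∈ Icc 2 T, ‖v t - v (t - 1)‖ := by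
  refine le_trans (sum_le_sum fun t _ => ?_)
    (sum_Icc_sum_range_sub_le (fun s => ‖v s - v (s - 1)‖) fun _ _ => norm_nonneg _)
  rw [sum_range_add, add_comm]
  gcongr <;> rw [norm_sub_rev]
  · exact norm_sub_sub_le_sum_range v t k
  · simpa only [Nat.sub_sub] using norm_sub_sub_le_sum_range v (t - k) l

theorem sum_Icc_add_comp_sub_le (a : ℕ → ℝ) {A B : ℝ} {m d₁ d₂ T : ℕ}
    (ha : ∀ s ∈ Icc 1 T, 0 ≤ a s) (hA : 0 ≤ A) (hB : 0 ≤ B) (hd₁ : d₁ ≤ m) (hd₂ : d₂ ≤ m) :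
    ∑ t ∈ Icc (m + 1) T, (A * a (t - d₁) + B * a (t - d₂)) ≤ (A + B) * ∑ s ∈ Icc 1 T, a s := by
  rw [sum_add_distrib, ← mul_sum, ← mul_sum, add_mul]
  gcongr
  · exact sum_Icc_comp_sub_le a ha (by omega)
  · exact sum_Icc_comp_sub_le a ha (by omega)

theorem sum_le_of_delayed_contraction {e b : ℕ → ℝ} {ρ R : ℝ} {τ T : ℕ} (hτT : τ ≤ T)
    (hρ : 0 ≤ ρ) (he : ∀ t ∈ Icc 1 T, 0 ≤ e t) (hinit : ∀ t ∈ Icc 1 τ, e t ≤ R)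
    (hrec : ∀ t ∈ Icc (τ + 1) T, e t ≤ ρ * e (t - τ) + b t) :
    (1 - ρ) * ∑ t ∈ Icc 1 T, e t ≤ τ * R + ∑ t ∈ Icc (τ + 1) T, b t := by
  have hsplit : ∑ t ∈ Icc 1 T, e t = ∑ t ∈ Icc 1 τ, e t + ∑ t ∈ Icc (τ + 1) T, e t := by
    simp only [Icc_add_one_left_eq_Ioc]
    exact (sum_Ioc_consecutive e (Nat.zero_le τ) hτT).symm
  have hinit_sum : ∑ t ∈ Icc 1 τ, e t ≤ τ * R := by
    simpa using sum_le_card_nsmul _ _ _ hinit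
  have hrec_sum : ∑ t ∈ Icc (τ + 1) T, e t ≤ ρ * ∑ t ∈ Icc 1 T, e t + ∑ t ∈ Icc (τ + 1) T, b t :=
    calc ∑ t ∈ Icc (τ + 1) T, e t ≤ ∑ t ∈ Icc (τ + 1) T, (ρ * e (t - τ) + b t) := sum_le_sum hrec
      _ = ρ * ∑ t ∈ Icc (τ + 1) T, e (t - τ) + ∑ t ∈ Icc (τ + 1) T, b t := by
          rw [sum_add_distrib, mul_sum]
      _ ≤ _ := by gcongr; exact sum_Icc_comp_sub_le e he (by omega)
  linarith

theorem sum_Icc_le_of_delayed_recursion {E : Type*} [SeminormedAddCommGroup E] (v : ℕ → E)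
    {e δ : ℕ → ℝ} {ρ R A B C : ℝ} {k l T : ℕ} (hT : k + l ≤ T) (hρ0 : 0 ≤ ρ) (hρ1 : ρ < 1)
    (he : ∀ t ∈ Icc 1 T, 0 ≤ e t) (hδ : ∀ s ∈ Icc 1 T, 0 ≤ δ s) (hA : 0 ≤ A) (hB : 0 ≤ B)
    (hC : A + B ≤ C) (hinit : ∀ t ∈ Icc 1 (k + l), e t ≤ R)
    (hrec : ∀ t ∈ Icc (k + l + 1) T, e t ≤ ρ * e (t - (k + l))
      + ((‖v (t - (k + l)) - v (t - k)‖ + ‖v (t - k) - v t‖)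
        + (A * δ (t - (k + l)) + B * δ (t - k)))) :
    ∑ t ∈ Icc 1 T, e t ≤ (((k + l : ℕ) : ℝ) * R
      + ((k + l : ℕ) : ℝ) * ∑ t ∈ Icc 2 T, ‖v t - v (t - 1)‖
      + C * ∑ t ∈ Icc 1 T, δ t) / (1 - ρ) := by
  have hsum := sum_le_of_delayed_contraction hT hρ0 he hinit hrec
  rw [sum_add_distrib] at hsum
  have hpath := sum_norm_sub_delayed_le v k l T
  have herr := sum_Icc_add_comp_sub_le δ hδ hA hB le_rfl (Nat.le_add_right k l)
  have hC' := mul_le_mul_of_nonneg_right hC (sum_nonneg hδ)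
  rw [le_div_iff₀ (sub_pos.2 hρ1), mul_comm]
  linarith

theorem stmt_14_general
    {E : Type*} [NormedAddCommGroup E] [InnerProductSpace ℝ E] [FiniteDimensional ℝ E]
    (X : Set E) (hXconv : Convex ℝ X)
    (R : ℝ) (hR : ∀ a ∈ X, ∀ b ∈ X, ‖a - b‖ ≤ R)
    (T τl τr Jr Jl : ℕ)
    (hτT : τl + τr < T) (hJ : 1 ≤ Jr + Jl)
    (μ L α γ : ℝ) (hμL : μ ≤ L) (hLα : L ≤ α)
    (hγ0 : 0 < γ) (hγ : γ < 2 * μ)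
    (f : ℕ → E → ℝ) (hdiff : ∀ t, 1 ≤ t → t ≤ T → Differentiable ℝ (f t))
    (hsc : ∀ t, 1 ≤ t → t ≤ T → ∀ a ∈ X, ∀ b ∈ X,
      f t a + ⟪gradient (f t) a, b - a⟫ + μ / 2 * ‖b - a‖ ^ 2 ≤ f t b)
    (hsm : ∀ t, 1 ≤ t → t ≤ T → ∀ a ∈ X, ∀ b ∈ X,
      f t b ≤ f t a + ⟪gradient (f t) a, b - a⟫ + L / 2 * ‖b - a‖ ^ 2)
    (D : ℝ) (hD : ∀ t, 1 ≤ t → t ≤ T → ∀ x ∈ X, ‖gradient (f t) x‖ ≤ D)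
    (xstar : ℕ → E) (hxsX : ∀ t, 1 ≤ t → t ≤ T → xstar t ∈ X)
    (hxsmin : ∀ t, 1 ≤ t → t ≤ T → ∀ x ∈ X, f t (xstar t) ≤ f t x)
    (δ : ℕ → ℝ) (hδ : ∀ t, 1 ≤ t → t ≤ T → 0 ≤ δ t)
    (x : ℕ → E) (hxX : ∀ t, 1 ≤ t → t ≤ T → x t ∈ X)
    (hiter : ∀ t, τl + τr < t → t ≤ T → ∃ y z : ℕ → E,
      y 0 = x (t - (τl + τr)) ∧
      (∀ j, 1 ≤ j → j ≤ Jr → ∃ g : E,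
        ‖g - gradient (f (t - (τl + τr))) (y (j - 1))‖ ≤ δ (t - (τl + τr)) ∧ y j ∈ X ∧
        ∀ v ∈ X, ‖(y (j - 1) - (1 / α) • g) - y j‖ ≤ ‖(y (j - 1) - (1 / α) • g) - v‖) ∧
      z 0 = y Jr ∧
      (∀ j, 1 ≤ j → j ≤ Jl → ∃ g : E,
        ‖g - gradient (f (t - τl)) (z (j - 1))‖ ≤ δ (t - τl) ∧ z j ∈ X ∧
        ∀ v ∈ X, ‖(z (j - 1) - (1 / α) • g) - z j‖ ≤ ‖(z (j - 1) - (1 / α) • g) - v‖) ∧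
      x t = z Jl) :
    ∑ t ∈ Finset.Icc 1 T, (f t (x t) - f t (xstar t))
      ≤ ((τl + τr : ℕ) : ℝ) * D * R
        + D / (1 - Real.sqrt ((α - μ) / (α + μ - γ)) ^ (Jl + Jr))
          * (((τl + τr : ℕ) : ℝ) * R
            + ((τl + τr : ℕ) : ℝ) * ∑ t ∈ Finset.Icc 2 T, ‖xstar t - xstar (t - 1)‖
            + Real.sqrt (1 / (γ * (α + μ - γ)))
                / (1 - Real.sqrt ((α - μ) / (α + μ - γ)))
              * ∑ t ∈ Finset.Icc 1 T, δ t) := by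
  set q := √((α - μ) / (α + μ - γ)) with hq_def
  set c := √(1 / (γ * (α + μ - γ)))
  have hq0 : 0 ≤ q := Real.sqrt_nonneg _
  have hc0 : 0 ≤ c := Real.sqrt_nonneg _
  have hq1 : q < 1 := by
    rw [hq_def, Real.sqrt_lt' one_pos, one_pow, div_lt_one (by linarith)]
    linarith
  have hx1 : x 1 ∈ X := hxX 1 le_rfl (by omega)
  have hR0 : 0 ≤ R := (norm_nonneg _).trans (hR _ hx1 _ hx1)
  have hD0 : 0 ≤ D := (norm_nonneg _).trans (hD 1 le_rfl (by omega) _ hx1)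
  have hphase : ∀ s, 1 ≤ s → s ≤ T → ∀ (J : ℕ) (u : ℕ → E), u 0 ∈ X →
      IsInexactProjGradRun X α (δ s) (f s) J u → u J ∈ X ∧
        ‖u J - xstar s‖ ≤ q ^ J * ‖u 0 - xstar s‖ + c * δ s * ∑ i ∈ range J, q ^ i :=
    fun s hs1 hsT J u hu0 hrun => ⟨hrun.mem hu0 le_rfl,
      hrun.norm_sub_le hu0 hXconv (hμL.trans hLα) hLα hγ0 hγ (hsc s hs1 hsT) (hsm s hs1 hsT)
        (isMinOn_iff.mpr (hxsmin s hs1 hsT)) (hdiff s hs1 hsT _) (hxsX s hs1 hsT) (hδ s hs1 hsT)⟩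
  have hgeom : c * (q ^ Jl * ∑ i ∈ range Jr, q ^ i) + c * ∑ i ∈ range Jl, q ^ i ≤ c / (1 - q) := by
    rw [← mul_add, div_eq_mul_one_div c]
    exact mul_le_mul_of_nonneg_left (pow_mul_geom_sum_add_geom_sum_le hq0 hq1 Jl Jr) hc0
  have hdist := sum_Icc_le_of_delayed_recursion xstar hτT.le (pow_nonneg hq0 (Jl + Jr))
    (pow_lt_one₀ hq0 hq1 (by omega)) (fun t _ => norm_nonneg _)
    (fun s hs => hδ s (mem_Icc.mp hs).1 (mem_Icc.mp hs).2) (by positivity) (by positivity) hgeom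
    (fun t ht => hR _ (hxX t (mem_Icc.mp ht).1 (by grind)) _ (hxsX t (mem_Icc.mp ht).1 (by grind)))
    fun t ht => by
      obtain ⟨ht1, htT⟩ := mem_Icc.mp ht
      obtain ⟨y, z, hy0, hy, hz0, hz, hxt⟩ := hiter t (by omega) htT
      obtain ⟨hyX, hy⟩ := hphase (t - (τl + τr)) (by omega) (by omega) Jr y
        (hy0 ▸ hxX _ (by omega) (by omega)) hy
      obtain ⟨-, hz⟩ := hphase (t - τl) (by omega) (by omega) Jl z (hz0 ▸ hyX) hz
      rw [hy0] at hy
      rw [hz0] at hz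
      rw [hxt]
      exact (norm_sub_le_of_two_phases hq0 hq1.le hy hz).trans_eq (by ring)
  calc ∑ t ∈ Icc 1 T, (f t (x t) - f t (xstar t))
      ≤ ∑ t ∈ Icc 1 T, D * ‖x t - xstar t‖ := sum_le_sum fun t ht => by
        obtain ⟨ht1, htT⟩ := mem_Icc.mp ht
        exact sub_le_mul_norm_sub_of_le_add_inner (by linarith)
          (hsc t ht1 htT _ (hxX t ht1 htT) _ (hxsX t ht1 htT)) (hD t ht1 htT _ (hxX t ht1 htT))
    _ = D * ∑ t ∈ Icc 1 T, ‖x t - xstar t‖ := (mul_sum _ _ _).symm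
    _ ≤ D * _ := mul_le_mul_of_nonneg_left hdist hD0
    _ = D / _ * _ := by ring
    _ ≤ _ := le_add_of_nonneg_left (mul_nonneg (mul_nonneg (Nat.cast_nonneg _) hD0) hR0)

/-- Theorem 2(i) of the paper: dynamic regret bound for HiOCO with non-zero
local delay `τ_l ≥ 1` and remote delay `τ_r ≥ 1`, total delay `τ = τ_l + τ_r`.
With `η = (α − μ)/(α + μ − γ)` and `β = 1/(γ(α + μ − γ))`,
`Σ_{t=1}^{T} (f_t(x_t) − f_t(x_t*)) ≤ τDR
  + (D/(1 − (√η)^{J_l+J_r})) (τR + τΠ* + (√β/(1 − √η))Δ)`. -/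
theorem stmt_14
    {E : Type*} [NormedAddCommGroup E] [InnerProductSpace ℝ E] [FiniteDimensional ℝ E]
    (X : Set E) (hXne : X.Nonempty) (hXcp : IsCompact X) (hXconv : Convex ℝ X)
    (R : ℝ) (hR : ∀ a ∈ X, ∀ b ∈ X, ‖a - b‖ ≤ R)
    (T τl τr Jr Jl : ℕ) (hT : 1 ≤ T) (hτl : 1 ≤ τl) (hτr : 1 ≤ τr)
    (hτT : τl + τr < T) (hJ : 1 ≤ Jr + Jl)
    (μ L α γ : ℝ) (hμ : 0 < μ) (hμL : μ ≤ L) (hLα : L ≤ α)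
    (hγ0 : 0 < γ) (hγ : γ < 2 * μ)
    (f : ℕ → E → ℝ) (hdiff : ∀ t, 1 ≤ t → t ≤ T → Differentiable ℝ (f t))
    (hsc : ∀ t, 1 ≤ t → t ≤ T → ∀ a ∈ X, ∀ b ∈ X,
      f t a + ⟪gradient (f t) a, b - a⟫ + μ / 2 * ‖b - a‖ ^ 2 ≤ f t b)
    (hsm : ∀ t, 1 ≤ t → t ≤ T → ∀ a ∈ X, ∀ b ∈ X,
      f t b ≤ f t a + ⟪gradient (f t) a, b - a⟫ + L / 2 * ‖b - a‖ ^ 2)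
    (D : ℝ) (hD : ∀ t, 1 ≤ t → t ≤ T → ∀ x ∈ X, ‖gradient (f t) x‖ ≤ D)
    (xstar : ℕ → E) (hxsX : ∀ t, 1 ≤ t → t ≤ T → xstar t ∈ X)
    (hxsmin : ∀ t, 1 ≤ t → t ≤ T → ∀ x ∈ X, f t (xstar t) ≤ f t x)
    (δ : ℕ → ℝ) (hδ : ∀ t, 1 ≤ t → t ≤ T → 0 ≤ δ t)
    (x : ℕ → E) (hxX : ∀ t, 1 ≤ t → t ≤ T → x t ∈ X)
    (hiter : ∀ t, τl + τr < t → t ≤ T → ∃ y z : ℕ → E,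
      y 0 = x (t - (τl + τr)) ∧
      (∀ j, 1 ≤ j → j ≤ Jr → ∃ g : E,
        ‖g - gradient (f (t - (τl + τr))) (y (j - 1))‖ ≤ δ (t - (τl + τr)) ∧ y j ∈ X ∧
        ∀ v ∈ X, ‖(y (j - 1) - (1 / α) • g) - y j‖ ≤ ‖(y (j - 1) - (1 / α) • g) - v‖) ∧
      z 0 = y Jr ∧
      (∀ j, 1 ≤ j → j ≤ Jl → ∃ g : E,
        ‖g - gradient (f (t - τl)) (z (j - 1))‖ ≤ δ (t - τl) ∧ z j ∈ X ∧
        ∀ v ∈ X, ‖(z (j - 1) - (1 / α) • g) - z j‖ ≤ ‖(z (j - 1) - (1 / α) • g) - v‖) ∧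
      x t = z Jl) :
    ∑ t ∈ Finset.Icc 1 T, (f t (x t) - f t (xstar t))
      ≤ ((τl + τr : ℕ) : ℝ) * D * R
        + D / (1 - Real.sqrt ((α - μ) / (α + μ - γ)) ^ (Jl + Jr))
          * (((τl + τr : ℕ) : ℝ) * R
            + ((τl + τr : ℕ) : ℝ) * ∑ t ∈ Finset.Icc 2 T, ‖xstar t - xstar (t - 1)‖
            + Real.sqrt (1 / (γ * (α + μ - γ)))
                / (1 - Real.sqrt ((α - μ) / (α + μ - γ)))
              * ∑ t ∈ Finset.Icc 1 T, δ t) :=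
  stmt_14_general X hXconv R hR T τl τr Jr Jl hτT hJ μ L α γ hμL hLα hγ0 hγ f hdiff hsc hsm D hD
    xstar hxsX hxsmin δ hδ x hxX hiter
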